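/- arXiv:1908.08838 — 5 statements merged into one kernel-verified Lean document; each statement's English description precedes it below -/
import Mathlib

section
/- Let G be cyclic of order 2^k with k ≥ 2, and let N be the unique subgroup of order 2^m with 2 ≤ m < k. Then the subgroup of Aut(G) consisting of automorphisms that fix N pointwise is cyclic of order 2^(k-m). -/
/-!
Identify `Aut(G)` with `(ZMod 2^k)ˣ`, the automorphism attached to a unit `u` being `g ↦ g ^ u`.
Such a power map fixes the subgroup `N` pointwise iff `u ≡ 1` modulo the exponent `2^m` of `N`,
so the fixer of `N` is the kernel of reduction `(ZMod 2^k)ˣ → (ZMod 2^m)ˣ`. Reduction is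
surjective, so the kernel has order `φ(2^k) / φ(2^m) = 2^(k-m)`, and it contains `1 + 2^m`,
whose order is `2^(k-m)` because `m ≥ 2`.
-/

theorem Group.forall_zpow_eq_self_iff_exponent_dvd {G : Type*} [Group G] (j : ℤ) :
    (∀ g : G, g ^ j = g) ↔ (Monoid.exponent G : ℤ) ∣ j - 1 := by
  simp only [Group.exponent_dvd_iff_forall_zpow_eq_one, zpow_sub_one, mul_inv_eq_one]

namespace ZMod

theorem unitsMap_eq_one_iff {d n : ℕ} (h : d ∣ n) (u : (ZMod n)ˣ) :
    unitsMap h u = 1 ↔ (d : ℤ) ∣ (u : ZMod n).cast - 1 := by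
  set j : ℤ := (u : ZMod n).cast
  have hu : (u : ZMod n) = j := (intCast_zmod_cast _).symm
  rw [Units.ext_iff, unitsMap_val, hu, cast_intCast h, Units.val_one, ← Int.cast_one,
    intCast_eq_intCast_iff_dvd_sub, dvd_sub_comm]

theorem card_ker_unitsMap_mul_totient {d n : ℕ} [NeZero n] (h : d ∣ n) :
    Nat.card (unitsMap h).ker * d.totient = n.totient := by
  have : NeZero d := ⟨ne_zero_of_dvd_ne_zero (NeZero.ne n) h⟩
  rw [← card_units_eq_totient, ← card_units_eq_totient, ← Nat.card_eq_fintype_card,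
    ← Nat.card_eq_fintype_card, ← (unitsMap h).ker.card_mul_index, Subgroup.index_ker,
    MonoidHom.range_eq_top.mpr (unitsMap_surjective h), Subgroup.card_top]

theorem card_ker_unitsMap_prime_pow {p : ℕ} (hp : p.Prime) {m : ℕ} (hm : m ≠ 0) (n : ℕ) :
    Nat.card (unitsMap (pow_dvd_pow p (Nat.le_add_left m n))).ker = p ^ n := by
  have : NeZero p := ⟨hp.ne_zero⟩
  have htotient : (p ^ (n + m)).totient = p ^ n * (p ^ m).totient := by
    rw [Nat.totient_prime_pow hp (by omega), Nat.totient_prime_pow hp (by omega),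
      Nat.add_sub_assoc (by omega), pow_add, mul_assoc]
  refine Nat.eq_of_mul_eq_mul_right (Nat.totient_pos.mpr (pow_pos hp.pos m)) ?_
  rw [card_ker_unitsMap_mul_totient, htotient]

theorem isCyclic_ker_unitsMap_prime_pow {p : ℕ} (hp : p.Prime) {m : ℕ} (hm : m ≠ 0)
    (hpm : m + 2 ≤ p * m) (n : ℕ) :
    IsCyclic (unitsMap (pow_dvd_pow p (Nat.le_add_left m n))).ker := by
  have horder := orderOf_one_add_mul_prime_pow hp m hm hpm 1 (by norm_cast; exact hp.not_dvd_one) n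
  rw [Int.cast_one, mul_one] at horder
  have hunit : IsUnit (1 + p ^ m : ZMod (p ^ (n + m))) :=
    (orderOf_pos_iff.mp (horder ▸ pow_pos hp.pos n)).isUnit
  have hker : hunit.unit ∈ (unitsMap (pow_dvd_pow p (Nat.le_add_left m n))).ker := by
    rw [MonoidHom.mem_ker, Units.ext_iff, unitsMap_val, IsUnit.unit_spec,
      ← castHom_apply (h := pow_dvd_pow p (Nat.le_add_left m n)), map_add, map_one, map_pow,
      map_natCast, ← Nat.cast_pow, natCast_self, add_zero, Units.val_one]
  refine isCyclic_of_orderOf_eq_card ⟨_, hker⟩ ?_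
  rw [Subgroup.orderOf_mk, ← orderOf_units, IsUnit.unit_spec, horder,
    card_ker_unitsMap_prime_pow hp hm]

end ZMod

namespace IsCyclic

variable {G : Type*} [Group G] [h : IsCyclic G]

theorem mulAut_apply_eq_zpow (σ : MulAut G) (g : G) :
    σ g = g ^ ((mulAutMulEquiv G σ : ZMod (Nat.card G)).cast : ℤ) := by
  obtain ⟨x, rfl⟩ := ((zmodCyclicMulEquiv h).surjective.comp Multiplicative.ofAdd.surjective) g
  have hsymm := mulAutMulEquiv_symm_apply_apply G (mulAutMulEquiv G σ)
  rw [MulEquiv.symm_apply_apply] at hsymm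
  rw [Function.comp_apply, hsymm, MulEquiv.symm_apply_apply, toAdd_ofAdd, ← map_zpow,
    ← ofAdd_zsmul, zsmul_eq_mul, ZMod.intCast_zmod_cast]
  rfl

theorem map_fixingSubgroup_mulAutMulEquiv (N : Subgroup G) :
    (fixingSubgroup (MulAut G) (N : Set G)).map (mulAutMulEquiv G).toMonoidHom =
      (ZMod.unitsMap N.card_subgroup_dvd_card).ker := by
  ext u
  obtain ⟨σ, rfl⟩ := (mulAutMulEquiv G).surjective u
  rw [Subgroup.mem_map_equiv, MulEquiv.symm_apply_apply, mem_fixingSubgroup_iff,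
    MonoidHom.mem_ker, ZMod.unitsMap_eq_one_iff, ← IsCyclic.exponent_eq_card,
    ← Group.forall_zpow_eq_self_iff_exponent_dvd, Subtype.forall]
  simp only [MulAut.smul_def, Subtype.ext_iff, Subgroup.coe_zpow, ← mulAut_apply_eq_zpow,
    SetLike.mem_coe]

noncomputable def fixingSubgroupMulEquivKerUnitsMap (N : Subgroup G) :
    fixingSubgroup (MulAut G) (N : Set G) ≃* (ZMod.unitsMap N.card_subgroup_dvd_card).ker :=
  ((mulAutMulEquiv G).subgroupMap _).trans
    (MulEquiv.subgroupCongr (map_fixingSubgroup_mulAutMulEquiv N))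

end IsCyclic

theorem centralizer_aut_cyclic_general (G : Type*) [Group G] (k m : ℕ)
    (hm : 2 ≤ m) (hmk : m < k) (hG : IsCyclic G) (hGcard : Nat.card G = 2 ^ k)
    (N : Subgroup G) (hN : Nat.card N = 2 ^ m)
    (C : Subgroup (MulAut G)) (hC : ∀ σ : MulAut G, σ ∈ C ↔ ∀ g ∈ N, σ g = g) :
    IsCyclic C ∧ Nat.card C = 2 ^ (k - m) := by
  obtain rfl : C = fixingSubgroup (MulAut G) (N : Set G) := by
    ext σ
    rw [hC, mem_fixingSubgroup_iff]
    rfl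
  let e := IsCyclic.fixingSubgroupMulEquivKerUnitsMap N
  rw [e.isCyclic, Nat.card_congr e.toEquiv]
  obtain ⟨n, rfl⟩ := Nat.exists_eq_add_of_le' hmk.le
  -- the kernel's type depends on the divisibility proof, so rewrite the orders under a binder
  generalize N.card_subgroup_dvd_card = hd
  revert hd
  rw [hN, hGcard]
  intro hd
  exact ⟨ZMod.isCyclic_ker_unitsMap_prime_pow Nat.prime_two (by omega) (by omega) n,
    by rw [ZMod.card_ker_unitsMap_prime_pow Nat.prime_two (by omega), Nat.add_sub_cancel]⟩

/-- Let `G` be cyclic of order `2 ^ k` (`k ≥ 2`) and `N` its (unique) subgroup of order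
`2 ^ m` with `2 ≤ m < k`. Then the subgroup of `Aut(G)` consisting of automorphisms fixing
`N` pointwise is cyclic of order `2 ^ (k - m)`. -/
theorem centralizer_aut_cyclic (G : Type*) [Group G] (k m : ℕ) (hk : 2 ≤ k)
    (hm : 2 ≤ m) (hmk : m < k) (hG : IsCyclic G) (hGcard : Nat.card G = 2 ^ k)
    (N : Subgroup G) (hN : Nat.card N = 2 ^ m)
    (C : Subgroup (MulAut G)) (hC : ∀ σ : MulAut G, σ ∈ C ↔ ∀ g ∈ N, σ g = g) :
    IsCyclic C ∧ Nat.card C = 2 ^ (k - m) :=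
  centralizer_aut_cyclic_general G k m hm hmk hG hGcard N hN C hC
end

section
/- Let G = ⟨a⟩ ≅ Z_{2^n} with n ≥ 3, and let h = a^α y^γ in Hol(G) with 0 ≤ α ≤ 2^n - 1 and 0 ≤ γ ≤ 2^{n-2} - 1, not both zero. Then the order of h equals max(2^{n-2}/γ₂, 2^n/α₂), where γ₂ and α₂ denote the 2-parts of γ and α, with the convention that the corresponding term is 1 when γ = 0 resp. α = 0. -/
/-- The element `a^b x^?y^?` of the holomorph of `ZMod N`, viewed as the permutation
`g ↦ (g + b) * u` of `ZMod N`: first translate by `b` (right multiplication by `a^b`),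
then apply the automorphism "multiplication by the unit `u`". -/
def aff (N : ℕ) (u : (ZMod N)ˣ) (b : ZMod N) : Equiv.Perm (ZMod N) :=
  (Equiv.addRight b).trans (Units.mulRight u)

/-- The automorphism `y : a ↦ a^5` of `ZMod (2^n)` as a unit. -/
def u5 (n : ℕ) : (ZMod (2 ^ n))ˣ :=
  ZMod.unitOfCoprime 5 (Nat.Coprime.pow_right n (by decide))

open Finset

/-- 5^(2^k) = 1 + 2^(k+2) * odd. -/
lemma five_pow_two_pow (k : ℕ) : ∃ m : ℕ, Odd m ∧ 5 ^ (2 ^ k) = 1 + 2 ^ (k + 2) * m := by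
  induction k with
  | zero => exact ⟨1, odd_one, by norm_num⟩
  | succ k ih =>
    obtain ⟨m, hm, he⟩ := ih
    refine ⟨m + 2 ^ (k + 1) * m ^ 2, hm.add_even (Even.mul_right ⟨2 ^ k, by ring⟩ _), ?_⟩
    have : (5:ℕ) ^ 2 ^ (k + 1) = (5 ^ 2 ^ k) ^ 2 := by
      rw [← pow_mul, pow_succ]
    rw [this, he]; ring

lemma u5_pow_eq_one_iff (n k : ℕ) : u5 n ^ k = 1 ↔ (2 ^ n : ℕ) ∣ 5 ^ k - 1 := by
  have h5 : ((u5 n : (ZMod (2 ^ n))ˣ) : ZMod (2 ^ n)) = ((5 : ℕ) : ZMod (2 ^ n)) := by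
    simp [u5, ZMod.coe_unitOfCoprime]
  rw [Units.ext_iff, Units.val_pow_eq_pow_val, h5, Units.val_one, ← Nat.cast_pow,
    show (1 : ZMod (2 ^ n)) = ((1 : ℕ) : ZMod (2 ^ n)) by norm_num,
    ZMod.natCast_eq_natCast_iff]
  rw [Nat.ModEq.comm, Nat.modEq_iff_dvd' (Nat.one_le_pow _ _ (by norm_num))]

lemma orderOf_u5 (n : ℕ) (hn : 3 ≤ n) : orderOf (u5 n) = 2 ^ (n - 2) := by
  have hdvd : orderOf (u5 n) ∣ 2 ^ (n - 2) := by
    rw [orderOf_dvd_iff_pow_eq_one, u5_pow_eq_one_iff]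
    obtain ⟨m, hm, he⟩ := five_pow_two_pow (n - 2)
    have : n - 2 + 2 = n := by omega
    rw [he, this]; simp
  obtain ⟨j, hj, hje⟩ := (Nat.dvd_prime_pow Nat.prime_two).mp hdvd
  have hjn : j = n - 2 := by
    by_contra hne
    have hj3 : j ≤ n - 3 := by omega
    have : orderOf (u5 n) ∣ 2 ^ (n - 3) := hje ▸ pow_dvd_pow 2 hj3
    rw [orderOf_dvd_iff_pow_eq_one, u5_pow_eq_one_iff] at this
    obtain ⟨m, hm, he⟩ := five_pow_two_pow (n - 3)
    have h32 : n - 3 + 2 = n - 1 := by omega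
    rw [he, h32] at this
    simp only [Nat.add_sub_cancel_left] at this
    have h2 : (2:ℕ) ^ n = 2 ^ (n - 1) * 2 := by
      rw [← pow_succ]; congr 1; omega
    rw [h2] at this
    have := (mul_dvd_mul_iff_left (a := (2:ℕ) ^ (n - 1)) (by positivity)).mp this
    exact (Nat.not_even_iff_odd.mpr hm) ((even_iff_two_dvd).mpr this)
  rw [hje, hjn]

lemma gcd_two_pow (s γ : ℕ) (hγ : γ ≠ 0) (hv : padicValNat 2 γ ≤ s) :
    Nat.gcd (2 ^ s) γ = 2 ^ (padicValNat 2 γ) := by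
  apply Nat.dvd_antisymm
  · obtain ⟨j, hj, hje⟩ := (Nat.dvd_prime_pow Nat.prime_two).mp (Nat.gcd_dvd_left (2 ^ s) γ)
    have : (2:ℕ) ^ j ∣ γ := hje ▸ Nat.gcd_dvd_right _ _
    have hjv : j ≤ padicValNat 2 γ := by
      rw [Nat.Prime.pow_dvd_iff_le_factorization Nat.prime_two hγ,
        Nat.factorization_def _ Nat.prime_two] at this
      exact this
    exact hje ▸ pow_dvd_pow 2 hjv
  · exact Nat.dvd_gcd (pow_dvd_pow 2 hv) pow_padicValNat_dvd

/-- 2-adic valuation of geometric sums of `u ≡ 1 [MOD 4]`. -/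
lemma geom_sum_val (u : ℕ) (hu : u % 4 = 1) :
    ∀ k : ℕ, k ≠ 0 → ∃ m : ℕ, Odd m ∧ ∑ i ∈ range k, u ^ i = 2 ^ (padicValNat 2 k) * m := by
  intro k
  induction k using Nat.strong_induction_on with
  | _ k ih =>
    intro hk
    rcases Nat.even_or_odd k with he | ho
    · -- k = 2*m'
      obtain ⟨m', rfl⟩ := he
      have hm' : m' ≠ 0 := by omega
      have hlt : m' < m' + m' := by omega
      obtain ⟨t, ht, hte⟩ := ih m' hlt hm'
      -- split the sum
      have hsplit : ∑ i ∈ range (m' + m'), u ^ i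
          = (1 + u ^ m') * ∑ i ∈ range m', u ^ i := by
        rw [Finset.sum_range_add]
        have : ∀ i, u ^ (m' + i) = u ^ m' * u ^ i := fun i => pow_add u m' i
        simp only [this, ← Finset.mul_sum]
        ring
      -- 1 + u^m' = 2 * odd
      have hum : u ^ m' % 4 = 1 := by
        rw [Nat.pow_mod, hu, one_pow]
        norm_num
      obtain ⟨q, hq⟩ : ∃ q, 1 + u ^ m' = 4 * q + 2 := by
        refine ⟨u ^ m' / 4, ?_⟩
        omega
      have hv : padicValNat 2 (m' + m') = padicValNat 2 m' + 1 := by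
        have : m' + m' = 2 * m' := by ring
        rw [this, padicValNat.mul (by norm_num) hm', padicValNat.self (by norm_num)]
        omega
      refine ⟨(2 * q + 1) * t, (Nat.odd_add_one.mpr (by simp [Nat.even_mul])).mul ht, ?_⟩
      rw [hsplit, hte, hq, hv]
      ring
    · -- k odd: sum is odd, valuation 0
      have hv : padicValNat 2 k = 0 := by
        apply padicValNat.eq_zero_of_not_dvd
        rw [Nat.two_dvd_ne_zero, Nat.odd_iff.mp ho]
      refine ⟨∑ i ∈ range k, u ^ i, ?_, by rw [hv]; ring⟩
      rw [Nat.odd_iff, Finset.sum_nat_mod]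
      have : ∀ i ∈ range k, u ^ i % 2 = 1 := by
        intro i _
        rw [Nat.pow_mod]
        have : u % 2 = 1 := by omega
        simp [this]
      rw [Finset.sum_congr rfl this]
      simp [Nat.odd_iff.mp ho]

lemma aff_pow_apply (N : ℕ) (u : (ZMod N)ˣ) (b : ZMod N) (k : ℕ) (g : ZMod N) :
    ((aff N u b) ^ k) g = g * (u : ZMod N) ^ k + b * u * ∑ i ∈ range k, (u : ZMod N) ^ i := by
  induction k generalizing g with
  | zero => simp
  | succ k ih =>
    rw [pow_succ, Equiv.Perm.mul_apply]
    have h1 : ∀ x : ZMod N, (aff N u b) x = (x + b) * u := fun _ => rfl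
    rw [h1, ih ((g + b) * u), Finset.sum_range_succ]
    ring

lemma aff_pow_eq_one_iff (N : ℕ) (u : (ZMod N)ˣ) (b : ZMod N) (k : ℕ) :
    (aff N u b) ^ k = 1 ↔ u ^ k = 1 ∧ b * ∑ i ∈ range k, (u : ZMod N) ^ i = 0 := by
  constructor
  · intro h
    have h0 := Equiv.ext_iff.mp h 0
    have h1 := Equiv.ext_iff.mp h 1
    simp only [aff_pow_apply, Equiv.Perm.coe_one, id_eq] at h0 h1
    have hb : b * u * ∑ i ∈ range k, (u : ZMod N) ^ i = 0 := by
      simpa using h0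
    have hbs : b * ∑ i ∈ range k, (u : ZMod N) ^ i = 0 := by
      have : (b * ∑ i ∈ range k, (u : ZMod N) ^ i) * u = 0 := by
        rw [← hb]; ring
      exact (Units.mul_left_eq_zero u).mp this
    constructor
    · have : (u : ZMod N) ^ k = 1 := by
        have := h1
        rw [one_mul] at this
        calc (u : ZMod N) ^ k = (u : ZMod N) ^ k + b * u * ∑ i ∈ range k, (u : ZMod N) ^ i := by
              rw [hb, add_zero]
          _ = 1 := this
      exact Units.ext (by rw [Units.val_pow_eq_pow_val, this, Units.val_one])
    · exact hbs
  · rintro ⟨hu, hb⟩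
    ext g
    rw [aff_pow_apply]
    have hu' : (u : ZMod N) ^ k = 1 := by
      rw [← Units.val_pow_eq_pow_val, hu, Units.val_one]
    have hb' : b * (u : ZMod N) * ∑ i ∈ range k, (u : ZMod N) ^ i = 0 := by
      have : b * (u:ZMod N) * ∑ i ∈ range k, (u : ZMod N) ^ i
          = (b * ∑ i ∈ range k, (u : ZMod N) ^ i) * u := by ring
      rw [this, hb, zero_mul]
    simp [hu', hb']

/-- For `h = a^α y^γ ∈ Hol(Z_{2^n})` with `0 ≤ α ≤ 2^n - 1` and `0 ≤ γ ≤ 2^{n-2} - 1`,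
not both zero, the order of `h` is `max (2^{n-2}/γ₂) (2^n/α₂)`, where `γ₂, α₂` are the
2-parts, with the convention that the corresponding term is `1` when `γ = 0` resp. `α = 0`. -/
theorem orderOf_ay (n : ℕ) (hn : 3 ≤ n) (α γ : ℕ) (hα : α ≤ 2 ^ n - 1)
    (hγ : γ ≤ 2 ^ (n - 2) - 1) (h0 : ¬(α = 0 ∧ γ = 0)) :
    orderOf (aff (2 ^ n) (u5 n ^ γ) ((α : ℕ) : ZMod (2 ^ n)))
      = max (if γ = 0 then 1 else 2 ^ (n - 2) / 2 ^ (padicValNat 2 γ))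
            (if α = 0 then 1 else 2 ^ n / 2 ^ (padicValNat 2 α)) := by
  set vγ := padicValNat 2 γ with hvγ
  set vα := padicValNat 2 α with hvα
  -- exponents
  set e1 : ℕ := if γ = 0 then 0 else n - 2 - vγ with he1
  set e2 : ℕ := if α = 0 then 0 else n - vα with he2
  have hvγlt : γ ≠ 0 → vγ < n - 2 := by
    intro hγ0
    have h1 : 2 ^ vγ ∣ γ := pow_padicValNat_dvd
    have h2 : 2 ^ vγ ≤ γ := Nat.le_of_dvd (Nat.pos_of_ne_zero hγ0) h1
    have h3 : 2 ^ vγ < 2 ^ (n - 2) := by omega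
    exact (Nat.pow_lt_pow_iff_right (by norm_num)).mp h3
  have hvαlt : α ≠ 0 → vα < n := by
    intro hα0
    have h1 : 2 ^ vα ∣ α := pow_padicValNat_dvd
    have h2 : 2 ^ vα ≤ α := Nat.le_of_dvd (Nat.pos_of_ne_zero hα0) h1
    have h3 : 2 ^ vα < 2 ^ n := by
      have : (2:ℕ) ^ n ≥ 1 := Nat.one_le_pow _ _ (by norm_num)
      omega
    exact (Nat.pow_lt_pow_iff_right (by norm_num)).mp h3
  -- rewrite RHS
  have hrhs : max (if γ = 0 then 1 else 2 ^ (n - 2) / 2 ^ vγ)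
      (if α = 0 then 1 else 2 ^ n / 2 ^ vα) = 2 ^ (max e1 e2) := by
    have hA : (if γ = 0 then 1 else 2 ^ (n - 2) / 2 ^ vγ) = 2 ^ e1 := by
      rcases eq_or_ne γ 0 with h | h
      · simp [he1, h]
      · simp only [he1, h, if_false]
        exact Nat.pow_div (le_of_lt (hvγlt h)) (by norm_num)
    have hB : (if α = 0 then 1 else 2 ^ n / 2 ^ vα) = 2 ^ e2 := by
      rcases eq_or_ne α 0 with h | h
      · simp [he2, h]
      · simp only [he2, h, if_false]
        exact Nat.pow_div (le_of_lt (hvαlt h)) (by norm_num)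
    rw [hA, hB]
    rcases le_total e1 e2 with h | h
    · rw [max_eq_right h, max_eq_right (Nat.pow_le_pow_right (by norm_num) h)]
    · rw [max_eq_left h, max_eq_left (Nat.pow_le_pow_right (by norm_num) h)]
  rw [hrhs]
  -- order of u5^γ
  have hord : orderOf (u5 n ^ γ) = 2 ^ e1 := by
    rcases eq_or_ne γ 0 with h | h
    · simp [he1, h]
    · rw [orderOf_pow, orderOf_u5 n hn,
        gcd_two_pow (n - 2) γ h (le_of_lt (hvγlt h)), ← hvγ,
        Nat.pow_div (le_of_lt (hvγlt h)) (by norm_num), he1]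
      simp [h]
  -- key iff
  have key : ∀ k : ℕ, (aff (2 ^ n) (u5 n ^ γ) ((α : ℕ) : ZMod (2 ^ n))) ^ k = 1
      ↔ (2 ^ e1 ∣ k ∧ 2 ^ e2 ∣ k) := by
    intro k
    rw [aff_pow_eq_one_iff, ← hord, orderOf_dvd_iff_pow_eq_one]
    rcases eq_or_ne k 0 with rfl | hk
    · simp
    constructor
    · rintro ⟨h1, h2⟩
      refine ⟨h1, ?_⟩
      rcases eq_or_ne α 0 with hα0 | hα0
      · simp [he2, hα0]
      -- translate h2 to divisibility
      have hval : ((u5 n ^ γ : (ZMod (2^n))ˣ) : ZMod (2 ^ n)) = ((5 ^ γ : ℕ) : ZMod (2 ^ n)) := by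
        rw [Units.val_pow_eq_pow_val]
        simp [u5, ZMod.coe_unitOfCoprime]
      rw [hval] at h2
      have hcast : ((α : ℕ) : ZMod (2 ^ n)) * ∑ i ∈ range k, ((5 ^ γ : ℕ) : ZMod (2 ^ n)) ^ i
          = (((α * ∑ i ∈ range k, (5 ^ γ) ^ i : ℕ)) : ZMod (2 ^ n)) := by
        push_cast
        ring
      rw [hcast, ZMod.natCast_eq_zero_iff] at h2
      -- geom sum valuation
      have h5γ : (5:ℕ) ^ γ % 4 = 1 := by
        rw [Nat.pow_mod]
        norm_num
      obtain ⟨m, hm, hme⟩ := geom_sum_val (5 ^ γ) h5γ k hk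
      rw [hme] at h2
      -- 2^n ∣ α * (2^vk * m), m odd → 2^n ∣ α * 2^vk
      have hcop : Nat.Coprime (2 ^ n) m := by
        exact Nat.Coprime.pow_left _ (Nat.coprime_two_left.mpr hm)
      have h2' : (2:ℕ) ^ n ∣ α * 2 ^ (padicValNat 2 k) := by
        refine hcop.dvd_of_dvd_mul_right ?_
        have : α * (2 ^ (padicValNat 2 k) * m) = α * 2 ^ (padicValNat 2 k) * m := by ring
        rwa [this] at h2
      -- valuation bookkeeping
      have hαm : α * 2 ^ (padicValNat 2 k) ≠ 0 := by positivity
      rw [Nat.Prime.pow_dvd_iff_le_factorization Nat.prime_two hαm,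
        Nat.factorization_def _ Nat.prime_two,
        padicValNat.mul hα0 (by positivity), padicValNat.prime_pow] at h2'
      have hle : n - vα ≤ padicValNat 2 k := by omega
      rw [Nat.Prime.pow_dvd_iff_le_factorization Nat.prime_two hk,
        Nat.factorization_def _ Nat.prime_two]
      simp only [he2, hα0, if_false]
      exact hle
    · rintro ⟨h1, h2⟩
      refine ⟨h1, ?_⟩
      rcases eq_or_ne α 0 with hα0 | hα0
      · simp [hα0]
      have hval : ((u5 n ^ γ : (ZMod (2^n))ˣ) : ZMod (2 ^ n)) = ((5 ^ γ : ℕ) : ZMod (2 ^ n)) := by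
        rw [Units.val_pow_eq_pow_val]
        simp [u5, ZMod.coe_unitOfCoprime]
      rw [hval]
      have hcast : ((α : ℕ) : ZMod (2 ^ n)) * ∑ i ∈ range k, ((5 ^ γ : ℕ) : ZMod (2 ^ n)) ^ i
          = (((α * ∑ i ∈ range k, (5 ^ γ) ^ i : ℕ)) : ZMod (2 ^ n)) := by
        push_cast
        ring
      rw [hcast, ZMod.natCast_eq_zero_iff]
      have h5γ : (5:ℕ) ^ γ % 4 = 1 := by
        rw [Nat.pow_mod]; norm_num
      obtain ⟨m, hm, hme⟩ := geom_sum_val (5 ^ γ) h5γ k hk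
      rw [hme]
      simp only [he2, hα0, if_false] at h2
      rw [Nat.Prime.pow_dvd_iff_le_factorization Nat.prime_two hk,
        Nat.factorization_def _ Nat.prime_two] at h2
      have hvk : n ≤ vα + padicValNat 2 k := by
        have := hvαlt hα0
        omega
      have hdvd1 : (2:ℕ) ^ n ∣ 2 ^ vα * 2 ^ (padicValNat 2 k) := by
        rw [← pow_add]
        exact pow_dvd_pow 2 hvk
      have hdvd2 : (2:ℕ) ^ vα * 2 ^ (padicValNat 2 k) ∣ α * (2 ^ (padicValNat 2 k) * m) := by
        have hαd : 2 ^ vα ∣ α := pow_padicValNat_dvd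
        obtain ⟨c, hc⟩ := hαd
        exact ⟨c * m, by rw [hc]; ring⟩
      exact hdvd1.trans hdvd2
  -- finish: order equals 2^(max e1 e2)
  have hM : ((aff (2 ^ n) (u5 n ^ γ) ((α : ℕ) : ZMod (2 ^ n))) ^ (2 ^ max e1 e2) = 1) := by
    rw [key]
    exact ⟨pow_dvd_pow 2 (le_max_left _ _), pow_dvd_pow 2 (le_max_right _ _)⟩
  have hord1 : orderOf (aff (2 ^ n) (u5 n ^ γ) ((α : ℕ) : ZMod (2 ^ n))) ∣ 2 ^ max e1 e2 :=
    orderOf_dvd_of_pow_eq_one hM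
  have hord2 : 2 ^ max e1 e2 ∣ orderOf (aff (2 ^ n) (u5 n ^ γ) ((α : ℕ) : ZMod (2 ^ n))) := by
    have := (key _).mp (pow_orderOf_eq_one _)
    rcases le_total e1 e2 with h | h
    · rw [max_eq_right h]; exact this.2
    · rw [max_eq_left h]; exact this.1
  exact Nat.dvd_antisymm hord1 hord2
end

section
/- Let G = ⟨a⟩ ≅ Z_{2^n} with n ≥ 3, and consider Hol(G) acting on G. The element h = a^{2^t} y^γ with 0 ≤ t ≤ n-1 and 1 ≤ γ ≤ 2^{n-2}-1 is semiregular on G if and only if 2^t < 4·γ₂, where γ₂ is the 2-part of γ. -/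
/-- A permutation is semiregular if every power of it fixing a point is the identity. -/
def Semiregular {α : Type*} (σ : Equiv.Perm α) : Prop :=
  ∀ (k : ℤ) (g : α), (σ ^ k) g = g → σ ^ k = 1

open Finset

theorem Semiregular.eq_one_of_apply_eq_self {α : Type*} {σ : Equiv.Perm α} (hσ : Semiregular σ)
    {g : α} (hg : σ g = g) : σ = 1 := by
  simpa using hσ 1 g (by simpa using hg)

theorem semiregular_of_forall_pow_apply_eq_self {α : Type*} {σ : Equiv.Perm α}
    (h : ∀ (m : ℕ) (g : α), (σ ^ m) g = g → σ ^ m = 1) : Semiregular σ := by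
  intro k g hg
  obtain ⟨m, rfl | rfl⟩ := Int.eq_nat_or_neg k
  · simpa using h m g (by simpa using hg)
  · rw [zpow_neg, zpow_natCast, Equiv.Perm.inv_eq_iff_eq] at hg
    rw [zpow_neg, zpow_natCast, h m g hg.symm, inv_one]

section Aff

variable {N : ℕ} {u : (ZMod N)ˣ} {b : ZMod N}

theorem aff_apply (g : ZMod N) : aff N u b g = (g + b) * u := rfl

theorem not_semiregular_aff_of_sub_one_dvd (h : (u : ZMod N) - 1 ∣ b) (hb : b ≠ 0) :
    ¬ Semiregular (aff N u b) := by
  intro hσ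
  obtain ⟨k, rfl⟩ := h
  have hfix : aff N u ((u - 1) * k) (-k * u) = -k * u := by rw [aff_apply]; ring
  have h0 := congr($(hσ.eq_one_of_apply_eq_self hfix) 0)
  rw [aff_apply, zero_add, Equiv.Perm.one_apply, Units.mul_left_eq_zero] at h0
  exact hb h0

theorem aff_pow_apply_sub_self (m : ℕ) (g : ZMod N) :
    (aff N u b ^ m) g - g = (∑ i ∈ range m, (u : ZMod N) ^ i) * (aff N u b g - g) := by
  induction m with
  | zero => simp
  | succ m ih =>
    rw [pow_succ', Equiv.Perm.mul_apply, aff_apply, aff_apply, geom_sum_succ]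
    rw [aff_apply] at ih
    linear_combination (u : ZMod N) * ih

theorem semiregular_aff_of_forall_sub_self_eq_mul_isUnit (r : ZMod N)
    (h : ∀ x, ∃ ε, IsUnit ε ∧ aff N u b x - x = r * ε) : Semiregular (aff N u b) := by
  choose ε hε hdisp using h
  refine semiregular_of_forall_pow_apply_eq_self fun m g hg ↦ ?_
  have hpow (x : ZMod N) :
      (aff N u b ^ m) x - x = (∑ i ∈ range m, (u : ZMod N) ^ i) * r * ε x := by
    rw [aff_pow_apply_sub_self, hdisp, mul_assoc]
  have hzero : (∑ i ∈ range m, (u : ZMod N) ^ i) * r = 0 := by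
    rw [← (hε g).mul_left_eq_zero, ← hpow, hg, sub_self]
  ext x
  simpa [hzero, sub_eq_zero] using hpow x

end Aff

theorem isNilpotent_two_zmod (n : ℕ) : IsNilpotent (2 : ZMod (2 ^ n)) :=
  ⟨n, by exact_mod_cast ZMod.natCast_self (2 ^ n)⟩

theorem natCast_two_pow_ne_zero {n t : ℕ} (ht : t < n) : ((2 ^ t : ℕ) : ZMod (2 ^ n)) ≠ 0 := by
  rw [ne_eq, ZMod.natCast_eq_zero_iff, Nat.pow_dvd_pow_iff_le_right (by norm_num)]
  omega

theorem isUnit_two_pow_mul_add {n k : ℕ} (hk : k ≠ 0) (x : ZMod (2 ^ n)) {y : ZMod (2 ^ n)}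
    (hy : IsUnit y) : IsUnit (2 ^ k * x + y) := by
  rw [add_comm]
  have hnil : IsNilpotent ((2 : ZMod (2 ^ n)) ^ k * x) :=
    (Commute.all _ _).isNilpotent_mul_right ((isNilpotent_two_zmod n).pow_of_pos hk)
  exact hnil.isUnit_add_left_of_commute hy (Commute.all _ _)

theorem exists_intCast_eq_two_pow_mul_isUnit {z : ℤ} {k : ℕ} (h : emultiplicity 2 z = k)
    (n : ℕ) : ∃ c : ZMod (2 ^ n), IsUnit c ∧ (z : ZMod (2 ^ n)) = 2 ^ k * c := by
  obtain ⟨⟨c, rfl⟩, hmax⟩ := emultiplicity_eq_coe.mp h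
  have hc : ¬ 2 ∣ c := fun ⟨d, hd⟩ ↦ hmax ⟨d, by rw [hd, pow_succ]; ring⟩
  refine ⟨c, ?_, by push_cast; rfl⟩
  rw [ZMod.coe_int_isUnit_iff_isCoprime]
  push_cast
  exact ((Prime.coprime_iff_not_dvd Int.prime_two).mpr hc).pow_left

theorem emultiplicity_two_five_pow_sub_one {m : ℕ} (hm : m ≠ 0) :
    emultiplicity 2 ((5 : ℤ) ^ m - 1) = (padicValNat 2 m + 2 : ℕ) := by
  have lte := Int.two_pow_sub_pow' (x := 5) (y := 1) m (by norm_num) (by norm_num)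
  rw [one_pow, show (5 : ℤ) - 1 = 2 ^ 2 by norm_num,
    emultiplicity_pow_self (by norm_num) Int.prime_two.not_isUnit] at lte
  rw [lte, Nat.cast_add, add_comm, padicValNat_eq_emultiplicity hm, ← Int.natCast_emultiplicity]
  rfl

theorem u5_pow_sub_one_eq {γ : ℕ} (hγ : γ ≠ 0) (n : ℕ) :
    ∃ c : ZMod (2 ^ n), IsUnit c ∧
      ((u5 n ^ γ : (ZMod (2 ^ n))ˣ) : ZMod (2 ^ n)) - 1 = 2 ^ (padicValNat 2 γ + 2) * c := by
  obtain ⟨c, hc, hu⟩ :=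
    exists_intCast_eq_two_pow_mul_isUnit (emultiplicity_two_five_pow_sub_one hγ) n
  refine ⟨c, hc, ?_⟩
  rw [← hu]
  simp [u5, ZMod.coe_unitOfCoprime]

theorem semiregular_aff_two_pow_of_lt {n s t : ℕ} {u : (ZMod (2 ^ n))ˣ}
    (hu : 2 ^ s ∣ (u : ZMod (2 ^ n)) - 1) (hts : t < s) : Semiregular (aff (2 ^ n) u (2 ^ t)) := by
  obtain ⟨c, hc⟩ := hu
  refine semiregular_aff_of_forall_sub_self_eq_mul_isUnit (2 ^ t) fun x ↦
    ⟨2 ^ (s - t) * (c * x) + u, isUnit_two_pow_mul_add (by omega) _ u.isUnit, ?_⟩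
  have hs : (2 : ZMod (2 ^ n)) ^ s = 2 ^ t * 2 ^ (s - t) := by
    rw [← pow_add, Nat.add_sub_of_le hts.le]
  rw [aff_apply]
  linear_combination x * hc + c * x * hs

theorem semiregular_a2ty_general (n : ℕ) (t γ : ℕ) (ht : t ≤ n - 1)
    (hγ1 : 1 ≤ γ) :
    Semiregular (aff (2 ^ n) (u5 n ^ γ) ((2 ^ t : ℕ) : ZMod (2 ^ n)))
      ↔ 2 ^ t < 4 * 2 ^ (padicValNat 2 γ) := by
  obtain ⟨c, hc, hu⟩ := u5_pow_sub_one_eq (show γ ≠ 0 by omega) n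
  rw [show 4 * 2 ^ padicValNat 2 γ = 2 ^ (padicValNat 2 γ + 2) by ring,
    Nat.pow_lt_pow_iff_right (by norm_num)]
  refine ⟨fun hσ ↦ ?_, fun hts ↦ ?_⟩
  · by_contra! hst
    refine not_semiregular_aff_of_sub_one_dvd ?_ (natCast_two_pow_ne_zero (by omega)) hσ
    rw [hu, hc.mul_right_dvd, Nat.cast_pow, Nat.cast_ofNat]
    exact pow_dvd_pow 2 hst
  · rw [Nat.cast_pow, Nat.cast_ofNat]
    exact semiregular_aff_two_pow_of_lt (Dvd.intro c hu.symm) hts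

/-- In `Hol(Z_{2^n})` (`n ≥ 3`) acting on `Z_{2^n}`, the element `h = a^{2^t} y^γ` with
`0 ≤ t ≤ n-1` and `1 ≤ γ ≤ 2^{n-2} - 1` is semiregular iff `2^t < 4 γ₂`. -/
theorem semiregular_a2ty (n : ℕ) (hn : 3 ≤ n) (t γ : ℕ) (ht : t ≤ n - 1)
    (hγ1 : 1 ≤ γ) (hγ2 : γ ≤ 2 ^ (n - 2) - 1) :
    Semiregular (aff (2 ^ n) (u5 n ^ γ) ((2 ^ t : ℕ) : ZMod (2 ^ n)))
      ↔ 2 ^ t < 4 * 2 ^ (padicValNat 2 γ) :=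
  semiregular_a2ty_general n t γ ht hγ1
end

section
/- Let G = ⟨a⟩ ≅ Z_{2^n} with n ≥ 3, and consider Hol(G) acting on G. The element h = a^{2^t} x with 0 ≤ t ≤ n-1 is semiregular on G if and only if t = 0, i.e. h = a x. -/
lemma aff_neg_one_apply (N : ℕ) (b : ZMod N) (g : ZMod N) :
    aff N (-1) b g = -g - b := by
  simp [aff, Units.mulRight, sub_eq_add_neg]
  ring

/-- In `Hol(Z_{2^n})` (`n ≥ 3`) acting on `Z_{2^n}`, the element `h = a^{2^t} x` with
`0 ≤ t ≤ n-1` is semiregular iff `t = 0`, i.e. `h = a x`. -/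
theorem semiregular_a2tx (n : ℕ) (hn : 3 ≤ n) (t : ℕ) (ht : t ≤ n - 1) :
    Semiregular (aff (2 ^ n) (-1) ((2 ^ t : ℕ) : ZMod (2 ^ n))) ↔ t = 0 := by
  set c : ZMod (2 ^ n) := ((2 ^ t : ℕ) : ZMod (2 ^ n)) with hc
  set σ : Equiv.Perm (ZMod (2 ^ n)) := aff (2 ^ n) (-1) c with hσdef
  have happ : ∀ g : ZMod (2 ^ n), σ g = -g - c := fun g => aff_neg_one_apply _ _ _
  have hsq : σ * σ = 1 := by
    ext g
    simp only [Equiv.Perm.mul_apply, happ, Equiv.Perm.one_apply]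
    ring
  have key : ∀ k : ℤ, σ ^ k = 1 ∨ σ ^ k = σ := by
    intro k
    have h2 : σ ^ (2 : ℤ) = 1 := by
      rw [zpow_two]; exact hsq
    rcases Int.even_or_odd k with ⟨m, hm⟩ | ⟨m, hm⟩
    · left
      have : k = 2 * m := by omega
      rw [this, zpow_mul, h2, one_zpow]
    · right
      have : k = 2 * m + 1 := by omega
      rw [this, zpow_add, zpow_mul, h2, one_zpow, one_mul, zpow_one]
  have htlt : t < n := by omega
  constructor
  · intro hs
    by_contra h0
    have ht1 : 1 ≤ t := Nat.one_le_iff_ne_zero.mpr h0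
    -- fixed point of σ : g = -(2^(t-1))
    set g : ZMod (2 ^ n) := -((2 ^ (t - 1) : ℕ) : ZMod (2 ^ n)) with hg
    have hfix : σ g = g := by
      rw [happ, hg, hc, neg_neg]
      have : (2 : ℕ) ^ t = 2 ^ (t - 1) + 2 ^ (t - 1) := by
        have : t = (t - 1) + 1 := by omega
        nth_rewrite 1 [this]
        rw [pow_succ]; omega
      rw [this]
      push_cast
      ring
    have := hs 1 g (by rwa [zpow_one])
    rw [zpow_one] at this
    have h0' : σ 0 = 0 := by rw [this]; rfl
    rw [happ, neg_zero, zero_sub] at h0'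
    have hceq : c = 0 := by
      have := congrArg Neg.neg h0'
      simpa using this
    rw [hc] at hceq
    have hdvd : 2 ^ n ∣ 2 ^ t := (ZMod.natCast_eq_zero_iff _ _).mp hceq
    have := (Nat.pow_dvd_pow_iff_le_right (by norm_num)).mp hdvd
    omega
  · intro h0
    subst h0
    intro k g hfix
    rcases key k with hk | hk
    · exact hk
    · exfalso
      rw [hk, happ] at hfix
      -- -g - 1 = g in ZMod 2^n : impossible
      have heq : (2 : ZMod (2 ^ n)) * g + 1 = 0 := by
        have : -g - c = g := hfix
        have hc1 : c = 1 := by simp [hc]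
        rw [hc1] at this
        linear_combination -this
      have h2d : (2 : ℕ) ∣ 2 ^ n := dvd_pow_self 2 (by omega)
      have := congrArg (ZMod.castHom h2d (ZMod 2)) heq
      simp only [map_add, map_mul, map_one, map_zero, map_ofNat] at this
      have h2z : (2 : ZMod 2) = 0 := by decide
      rw [h2z, zero_mul, zero_add] at this
      exact one_ne_zero this
end

section
/- Let G = ⟨a⟩ ≅ Z_{2^n} with n ≥ 3, and consider Hol(G) acting on G. The element h = a^{2^t} x y^γ with 0 ≤ t ≤ n and 1 ≤ γ ≤ 2^{n-2}-1 is semiregular on G if and only if t = 0, i.e. h = a x y^γ. -/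
namespace SemiregAux

/-- `T U k = U + U^2 + ⋯ + U^k`. -/
def T (U : ℤ) : ℕ → ℤ
  | 0 => 0
  | k + 1 => U * T U k + U

lemma T_geom (U : ℤ) (k : ℕ) : (U - 1) * T U k = U * (U ^ k - 1) := by
  induction k with
  | zero => simp [T]
  | succ k ih =>
    show (U - 1) * (U * T U k + U) = U * (U ^ (k + 1) - 1)
    rw [pow_succ]
    linear_combination U * ih

lemma T_odd_iff (U : ℤ) (hU : Odd U) : ∀ k : ℕ, (Odd (T U k) ↔ Odd k)
  | 0 => by simp [T]
  | (k + 1) => by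
    have h : T U (k + 1) = U * (T U k + 1) := by show U * T U k + U = _; ring
    rw [h, Int.odd_mul, Nat.odd_add_one, ← T_odd_iff U hU k]
    have h2 : Odd (T U k + 1) ↔ Even (T U k) :=
      ⟨fun ⟨r, hr⟩ => ⟨r, by omega⟩, fun ⟨r, hr⟩ => ⟨r, by omega⟩⟩
    rw [h2]
    simp [hU, Int.not_odd_iff_even]

lemma five_pow_sub (v : ℕ) : ∀ m : ℕ, Odd m →
    ∃ c : ℤ, Odd c ∧ (5:ℤ) ^ (2 ^ v * m) - 1 = 2 ^ (v + 2) * c := by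
  induction v with
  | zero =>
    intro m hm
    obtain ⟨q, hq⟩ := hm
    have h24 : (24 : ℤ) ∣ (25:ℤ) ^ q - 1 := by
      have := sub_dvd_pow_sub_pow (25:ℤ) 1 q
      simpa using this
    obtain ⟨z, hz⟩ := (dvd_trans (by norm_num : (8:ℤ) ∣ 24) h24)
    refine ⟨10 * z + 1, ⟨5 * z, by ring⟩, ?_⟩
    have h5 : (5:ℤ) ^ m = 5 * (25:ℤ) ^ q := by
      rw [hq, pow_succ, pow_mul]; norm_num; ring
    have hm1 : (2:ℕ) ^ 0 * m = m := by norm_num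
    rw [hm1, h5]
    linear_combination 5 * hz
  | succ v ih =>
    intro m hm
    obtain ⟨c, hc, hc2⟩ := ih m hm
    refine ⟨c * (2 ^ (v + 1) * c + 1), ?_, ?_⟩
    · exact hc.mul ⟨2 ^ v * c, by ring⟩
    · have h : (2:ℕ) ^ (v + 1) * m = 2 ^ v * m * 2 := by ring
      rw [h, pow_mul]
      have hX : (5:ℤ) ^ (2 ^ v * m) = 2 ^ (v + 2) * c + 1 := by linarith
      rw [hX]; ring

lemma five_pow_add (γ : ℕ) : ∃ A : ℕ, Odd A ∧ 5 ^ γ + 1 = 2 * A := by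
  have h4 : (4 : ℕ) ∣ 5 ^ γ - 1 := by
    have := Nat.sub_dvd_pow_sub_pow 5 1 γ
    simpa using this
  obtain ⟨w, hw⟩ := h4
  have h1 : (1:ℕ) ≤ 5 ^ γ := Nat.one_le_pow _ _ (by norm_num)
  refine ⟨2 * w + 1, ⟨w, by ring⟩, by omega⟩

end SemiregAux

open SemiregAux in
/-- In `Hol(Z_{2^n})` (`n ≥ 3`) acting on `Z_{2^n}`, the element `h = a^{2^t} x y^γ` with
`0 ≤ t ≤ n` and `1 ≤ γ ≤ 2^{n-2} - 1` is semiregular iff `t = 0`, i.e. `h = a x y^γ`. -/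
theorem semiregular_a2txy (n : ℕ) (hn : 3 ≤ n) (t γ : ℕ) (ht : t ≤ n)
    (hγ1 : 1 ≤ γ) (hγ2 : γ ≤ 2 ^ (n - 2) - 1) :
    Semiregular (aff (2 ^ n) (-(u5 n ^ γ)) ((2 ^ t : ℕ) : ZMod (2 ^ n))) ↔ t = 0 := by
  haveI : NeZero (2 ^ n) := ⟨pow_ne_zero n two_ne_zero⟩
  set N := 2 ^ n with hN
  set U : ℤ := -(5:ℤ) ^ γ with hU
  set b : ZMod N := ((2 ^ t : ℕ) : ZMod N) with hb
  set σ : Equiv.Perm (ZMod N) := aff N (-(u5 n ^ γ)) b with hσ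
  have hUodd : Odd U := by
    refine ⟨-(5 ^ γ + 1) / 2 , ?_⟩
    obtain ⟨A, hA, hA2⟩ := five_pow_add γ
    have : (5:ℤ) ^ γ + 1 = 2 * (A : ℤ) := by exact_mod_cast hA2
    rw [hU]; omega
  have hu : ((-(u5 n ^ γ) : (ZMod N)ˣ) : ZMod N) = ((U : ℤ) : ZMod N) := by
    rw [hU]
    push_cast [u5, ZMod.coe_unitOfCoprime]
    norm_num
  have haff : ∀ x : ZMod N, σ x = (x + b) * ((U : ℤ) : ZMod N) := by
    intro x
    rw [hσ, ← hu]
    rfl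
  have key : ∀ (k : ℕ) (g : ZMod N),
      (σ ^ k) g = ((U ^ k : ℤ) : ZMod N) * g + b * ((T U k : ℤ) : ZMod N) := by
    intro k
    induction k with
    | zero => intro g; simp [T]
    | succ k ih =>
      intro g
      rw [pow_succ', Equiv.Perm.mul_apply, haff ((σ ^ k) g), ih]
      show _ = ((U ^ (k+1) : ℤ) : ZMod N) * g + b * ((U * T U k + U : ℤ) : ZMod N)
      push_cast
      ring
  constructor
  · -- semiregular → t = 0
    intro hsr
    by_contra ht0
    obtain ⟨t', rfl⟩ : ∃ t', t = t' + 1 := ⟨t - 1, by omega⟩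
    obtain ⟨A, hAodd, hA2⟩ := five_pow_add γ
    have hAunit : IsUnit ((A : ℕ) : ZMod N) := by
      rw [ZMod.isUnit_iff_coprime, hN]
      exact Nat.Coprime.pow_right n (Nat.coprime_two_right.mpr hAodd)
    obtain ⟨w, hw⟩ := hAunit
    set g : ZMod N := ((2 ^ t' : ℕ) : ZMod N) * ((U : ℤ) : ZMod N) * ((w⁻¹ : (ZMod N)ˣ) : ZMod N) with hg
    have hU1 : ((U : ℤ) : ZMod N) - 1 = -(2 * ((A:ℕ) : ZMod N)) := by
      have : (U : ℤ) - 1 = -(2 * (A : ℤ)) := by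
        have : (5:ℤ) ^ γ + 1 = 2 * (A : ℤ) := by exact_mod_cast hA2
        rw [hU]; omega
      calc ((U : ℤ) : ZMod N) - 1 = ((U - 1 : ℤ) : ZMod N) := by push_cast; ring
        _ = ((-(2 * (A:ℤ)) : ℤ) : ZMod N) := by rw [this]
        _ = -(2 * ((A:ℕ) : ZMod N)) := by push_cast; ring
    have hfix : σ g = g := by
      rw [haff]
      have hAw : ((A:ℕ) : ZMod N) * ((w⁻¹ : (ZMod N)ˣ) : ZMod N) = 1 := by
        rw [← hw]; exact w.mul_inv
      have h2t : ((2 ^ (t' + 1) : ℕ) : ZMod N) = 2 * ((2 ^ t' : ℕ) : ZMod N) := by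
        push_cast; ring
      have expand : (g + b) * ((U : ℤ) : ZMod N) - g
          = g * (((U : ℤ) : ZMod N) - 1) + b * ((U : ℤ) : ZMod N) := by ring
      have : (g + b) * ((U : ℤ) : ZMod N) - g = 0 := by
        rw [expand, hU1, hg, hb, h2t]
        have : ((2 ^ t' : ℕ) : ZMod N) * ((U : ℤ) : ZMod N) * ((w⁻¹ : (ZMod N)ˣ) : ZMod N) *
            -(2 * ((A:ℕ) : ZMod N)) =
            -(2 * ((2 ^ t' : ℕ) : ZMod N)) * ((U : ℤ) : ZMod N) *
              (((A:ℕ) : ZMod N) * ((w⁻¹ : (ZMod N)ˣ) : ZMod N)) := by ring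
        rw [this, hAw]
        ring
      linear_combination this
    have hne : σ ≠ 1 := by
      intro h1
      have h0 : σ 0 = 0 := by rw [h1]; rfl
      have h1' : σ 1 = 1 := by rw [h1]; rfl
      rw [haff, zero_add] at h0
      rw [haff] at h1'
      have hbz : b = 0 := by
        have := (Units.mul_left_eq_zero (u := -(u5 n ^ γ)) (a := b)).mp (by rw [hu]; exact h0)
        exact this
      rw [hbz, add_zero, one_mul] at h1'
      -- contradiction mod 4
      have h4 : (4 : ℕ) ∣ N := by
        rw [hN]
        exact (pow_dvd_pow 2 (by omega) : 2 ^ 2 ∣ 2 ^ n)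
      have := congrArg (ZMod.castHom h4 (ZMod 4)) h1'
      rw [map_intCast, map_one] at this
      rw [hU] at this
      push_cast at this
      norm_num at this
      rw [show ((5:ZMod 4)) = 1 by decide] at this
      simp at this
      exact absurd this (by decide)
    exact hne (by simpa using hsr 1 g (by simpa using hfix))
  · -- t = 0 → semiregular
    rintro rfl
    have hb1 : b = 1 := by rw [hb]; norm_num
    have hnat : ∀ (m : ℕ) (g : ZMod N), (σ ^ m) g = g → σ ^ m = 1 := by
      intro m g hfix
      rcases Nat.eq_zero_or_pos m with hm0 | hmpos
      · subst hm0; simp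
      have heq : ((U ^ m - 1 : ℤ) : ZMod N) * g = -((T U m : ℤ) : ZMod N) := by
        rw [key m g, hb1, one_mul] at hfix
        push_cast at hfix ⊢
        linear_combination hfix
      rcases Nat.even_or_odd m with hmeven | hmodd
      · -- m even: valuation argument
        have hj : γ * m ≠ 0 := by positivity
        obtain ⟨v, m', hm'odd, hjeq⟩ := Nat.exists_eq_two_pow_mul_odd hj
        have hUm : U ^ m = 5 ^ (γ * m) := by
          rw [hU, hmeven.neg_pow, ← pow_mul]
        obtain ⟨c, hcodd, hc⟩ := five_pow_sub v m' hm'odd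
        rw [← hjeq] at hc
        have hUm1 : U ^ m - 1 = 2 ^ (v + 2) * c := by rw [hUm]; exact hc
        -- T relation
        obtain ⟨A, hAodd, hA2⟩ := five_pow_add γ
        have hU1 : U - 1 = -(2 * (A : ℤ)) := by
          have : (5:ℤ) ^ γ + 1 = 2 * (A : ℤ) := by exact_mod_cast hA2
          rw [hU]; omega
        have hT : (A : ℤ) * T U m = -(2 ^ (v + 1) * (U * c)) := by
          have hgeom := T_geom U m
          rw [hU1, hUm1] at hgeom
          have h2 : (2:ℤ) * ((A:ℤ) * T U m) = 2 * (-(2 ^ (v+1) * (U * c))) := by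
            linear_combination -hgeom
          exact mul_left_cancel₀ two_ne_zero h2
        by_cases hvn : n ≤ v + 1
        · -- power is the identity
          have hTz : ((T U m : ℤ) : ZMod N) = 0 := by
            have hAu : IsUnit ((A : ℤ) : ZMod N) := by
              have : ((A : ℤ) : ZMod N) = ((A : ℕ) : ZMod N) := by push_cast; ring
              rw [this, ZMod.isUnit_iff_coprime, hN]
              exact Nat.Coprime.pow_right n (Nat.coprime_two_right.mpr hAodd)
            have hdvd : ((N : ℕ) : ℤ) ∣ (A:ℤ) * T U m := by
              rw [hT, hN]
              push_cast
              exact dvd_neg.mpr (dvd_mul_of_dvd_left (pow_dvd_pow 2 hvn) _)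
            have : ((A : ℤ) : ZMod N) * ((T U m : ℤ) : ZMod N) = 0 := by
              rw [← Int.cast_mul, ZMod.intCast_zmod_eq_zero_iff_dvd]
              exact_mod_cast hdvd
            exact (hAu.mul_right_eq_zero).mp this
          have hUz : ((U ^ m : ℤ) : ZMod N) = 1 := by
            have hdvd : ((N : ℕ) : ℤ) ∣ U ^ m - 1 := by
              rw [hUm1, hN]
              push_cast
              exact dvd_mul_of_dvd_left (pow_dvd_pow 2 (by omega : n ≤ v + 2)) _
            have : ((U ^ m - 1 : ℤ) : ZMod N) = 0 := by
              rw [ZMod.intCast_zmod_eq_zero_iff_dvd]; exact_mod_cast hdvd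
            push_cast at this ⊢
            linear_combination this
          ext x
          rw [key m x, hb1, hTz, hUz]
          simp
        · -- contradiction: no fixed point
          exfalso
          push_neg at hvn
          have hdvdN : ((2:ℕ) ^ (v + 2) : ℕ) ∣ N := by
            rw [hN]; exact pow_dvd_pow 2 (by omega)
          have := congrArg (ZMod.castHom hdvdN (ZMod (2 ^ (v + 2)))) heq
          rw [map_mul, map_neg, map_intCast, map_intCast] at this
          rw [hUm1] at this
          have hz : (((2:ℤ) ^ (v + 2) * c : ℤ) : ZMod (2 ^ (v + 2))) = 0 := by
            rw [ZMod.intCast_zmod_eq_zero_iff_dvd]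
            push_cast
            exact Dvd.intro c rfl
          rw [hz, zero_mul] at this
          have hTdvd : ((2:ℤ) ^ (v + 2)) ∣ T U m := by
            have : ((T U m : ℤ) : ZMod (2 ^ (v+2))) = 0 := by
              have := congrArg Neg.neg this
              simpa using this.symm
            rw [ZMod.intCast_zmod_eq_zero_iff_dvd] at this
            exact_mod_cast this
          obtain ⟨d, hd⟩ := hTdvd
          rw [hd] at hT
          have h2 : (2:ℤ) ^ (v+1) * (2 * ((A:ℤ) * d)) = 2 ^ (v+1) * (-(U * c)) := by
            linear_combination hT
          have hcan := mul_left_cancel₀ (pow_ne_zero (v+1) (two_ne_zero (α := ℤ))) h2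
          have hUcodd : Odd (-(U * c)) := (hUodd.mul hcodd).neg
          rw [← hcan] at hUcodd
          exact ((fun he => Int.not_odd_iff_even.mpr he) ⟨(A:ℤ) * d, by ring⟩) hUcodd
      · -- m odd: parity contradiction mod 2
        exfalso
        have hTodd : Odd (T U m) := (T_odd_iff U hUodd m).mpr hmodd
        have hUm1even : Even (U ^ m - 1) := by
          rcases hUodd.pow (n := m) with ⟨r, hr⟩
          exact ⟨r, by omega⟩
        have h2N : (2 : ℕ) ∣ N := by rw [hN]; exact dvd_pow_self 2 (by omega)
        have := congrArg (ZMod.castHom h2N (ZMod 2)) heq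
        rw [map_mul, map_neg, map_intCast, map_intCast] at this
        obtain ⟨s, hs⟩ := hUm1even
        obtain ⟨r, hr⟩ := hTodd
        rw [hs, hr] at this
        have h1 : ((s + s : ℤ) : ZMod 2) = 0 := by
          rw [ZMod.intCast_zmod_eq_zero_iff_dvd]
          exact ⟨s, by push_cast; ring⟩
        have h2 : ((2 * r + 1 : ℤ) : ZMod 2) = 1 := by
          push_cast
          rw [show ((2:ZMod 2)) = 0 by decide]
          ring
        rw [h1, h2, zero_mul] at this
        exact absurd this (by decide)
    -- reduce ℤ powers to ℕ powers
    intro k g hfix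
    have hordpos : 0 < orderOf σ := orderOf_pos σ
    have hmod : σ ^ k = σ ^ ((k % (orderOf σ : ℤ)).toNat) := by
      rw [← zpow_natCast, Int.toNat_of_nonneg
        (Int.emod_nonneg k (by exact_mod_cast hordpos.ne'))]
      exact (zpow_mod_orderOf σ k).symm
    rw [hmod] at hfix ⊢
    exact hnat _ g hfix
end
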